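/- For every x ∈ V(ℤ), the intersection of the Γ-orbit of x with 𝔘' is a finite set; in particular, the intersection of the Γ₀-orbit of x with 𝔘' is finite, so every mapping class group orbit contains at most finitely many integral solutions lying in 𝔘'. -/
import Mathlib


/-- The Vieta involution in coordinate `i`:
`x ↦ Function.update x i (αᵢ − xⱼxₗ − xᵢ)` where `j = i+1`, `l = i+2` (mod 3). -/
def vAct (α : Fin 3 → ℤ) (i : Fin 3) (x : Fin 3 → ℤ) : Fin 3 → ℤ :=
  Function.update x i (α i - x (i + 1) * x (i + 2) - x i)

/-- Membership in the integral cubic surface `V(ℤ)`. -/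
def onV (α : Fin 3 → ℤ) (β : ℤ) (x : Fin 3 → ℤ) : Prop :=
  x 0 ^ 2 + x 1 ^ 2 + x 2 ^ 2 + x 0 * x 1 * x 2
    - α 0 * x 0 - α 1 * x 1 - α 2 * x 2 - β = 0

/-- The height function `Δ(x) = |x₁| + |x₂| + |x₃|`. -/
def delta (x : Fin 3 → ℤ) : ℤ := |x 0| + |x 1| + |x 2|

/-- Membership in the finite exceptional set `𝔗`. -/
def inT (α : Fin 3 → ℤ) (β : ℤ) (x : Fin 3 → ℤ) : Prop :=
  onV α β x ∧ ∃ σ : Equiv.Perm (Fin 3),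
    |x (σ 0)| ≤ 1 ∨ |x (σ 1) * x (σ 2)| ≤ max (3 * |α (σ 0)|) 4

/-- Membership in the exceptional set `𝔘`. -/
def inU (α : Fin 3 → ℤ) (β : ℤ) (x : Fin 3 → ℤ) : Prop :=
  onV α β x ∧ ¬ inT α β x ∧ ∃ σ : Equiv.Perm (Fin 3),
    |x (σ 0)| = 2 ∧ delta (vAct α (σ 1) x) ≤ delta x ∧
      delta (vAct α (σ 2) x) ≤ delta x

/-- `y` lies in the `Γ`-orbit of `x`: it is obtained from `x` by a finite
sequence of Vieta involutions. -/
def gammaRel (α : Fin 3 → ℤ) (x y : Fin 3 → ℤ) : Prop :=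
  ∃ L : List (Fin 3), y = L.foldl (fun z i => vAct α i z) x

/-- `y` lies in the `Γ₀`-orbit (mapping class group orbit) of `x`: it is
obtained from `x` by an even-length sequence of Vieta involutions. -/
def gamma0Rel (α : Fin 3 → ℤ) (x y : Fin 3 → ℤ) : Prop :=
  ∃ L : List (Fin 3), L.length % 2 = 0 ∧ y = L.foldl (fun z i => vAct α i z) x

/-- `y` is a descendent of `x`: obtained by a finite sequence of Vieta
involutions along which `Δ` is non-increasing at every step. -/
def descendent (α : Fin 3 → ℤ) (x y : Fin 3 → ℤ) : Prop :=
  ∃ L : List (Fin 3), y = L.foldl (fun z i => vAct α i z) x ∧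
    ∀ t < L.length,
      delta ((L.take (t + 1)).foldl (fun z i => vAct α i z) x) ≤
        delta ((L.take t).foldl (fun z i => vAct α i z) x)

/-- Membership in `𝔗' = {𝒱ᵢ(x), 𝒱ⱼ𝒱ᵢ(x) : x ∈ 𝔗}`. -/
def inT' (α : Fin 3 → ℤ) (β : ℤ) (x : Fin 3 → ℤ) : Prop :=
  ∃ y, inT α β y ∧
    ((∃ i, x = vAct α i y) ∨ ∃ i j, x = vAct α j (vAct α i y))

/-- Membership in `𝔘' = {𝒱ᵢ(x), 𝒱ⱼ𝒱ᵢ(x) : x ∈ 𝔘}`. -/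
def inU' (α : Fin 3 → ℤ) (β : ℤ) (x : Fin 3 → ℤ) : Prop :=
  ∃ y, inU α β y ∧
    ((∃ i, x = vAct α i y) ∨ ∃ i j, x = vAct α j (vAct α i y))

section Aux

lemma f3cases : ∀ b e : Fin 3, e = b ∨ e = b + 1 ∨ e = b + 2 := by decide

lemma f3n1 : ∀ i : Fin 3, i + 1 ≠ i := by decide
lemma f3n2 : ∀ i : Fin 3, i + 2 ≠ i := by decide
lemma f311 : ∀ i : Fin 3, i + 1 + 1 = i + 2 := by decide
lemma f312 : ∀ i : Fin 3, i + 1 + 2 = i := by decide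
lemma f321 : ∀ i : Fin 3, i + 2 + 1 = i := by decide
lemma f322 : ∀ i : Fin 3, i + 2 + 2 = i + 1 := by decide

variable {α : Fin 3 → ℤ} {β : ℤ}

lemma vAct_self (i : Fin 3) (x : Fin 3 → ℤ) :
    vAct α i x i = α i - x (i + 1) * x (i + 2) - x i := by
  simp [vAct]

lemma vAct_ne {e i : Fin 3} (h : e ≠ i) (x : Fin 3 → ℤ) : vAct α i x e = x e := by
  simp [vAct, Function.update_of_ne h]

lemma vAct_invol (i : Fin 3) (x : Fin 3 → ℤ) : vAct α i (vAct α i x) = x := by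
  funext e
  by_cases h : e = i
  · subst h
    rw [vAct_self, vAct_ne (f3n1 e), vAct_ne (f3n2 e), vAct_self]
    ring
  · rw [vAct_ne h, vAct_ne h]

lemma delta_update (y : Fin 3 → ℤ) (j : Fin 3) (t : ℤ) :
    delta (Function.update y j t) = delta y - |y j| + |t| := by
  fin_cases j <;> simp [delta, Function.update_apply] <;> ring

lemma delta_vAct (i : Fin 3) (x : Fin 3 → ℤ) :
    delta (vAct α i x) = delta x - |x i| + |α i - x (i + 1) * x (i + 2) - x i| := by
  rw [vAct, delta_update]

lemma delta_nonneg (x : Fin 3 → ℤ) : 0 ≤ delta x := by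
  have := abs_nonneg (x 0); have := abs_nonneg (x 1); have := abs_nonneg (x 2)
  unfold delta; linarith

lemma abs_le_delta (x : Fin 3 → ℤ) (i : Fin 3) : |x i| ≤ delta x := by
  have := abs_nonneg (x 0); have := abs_nonneg (x 1); have := abs_nonneg (x 2)
  rcases f3cases 0 i with rfl | rfl | rfl
  · unfold delta; linarith
  · rw [show (0:Fin 3)+1 = 1 from by decide]; unfold delta; linarith
  · rw [show (0:Fin 3)+2 = 2 from by decide]; unfold delta; linarith

lemma onV_vAct (i : Fin 3) {x : Fin 3 → ℤ} (hx : onV α β x) : onV α β (vAct α i x) := by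
  unfold onV at hx ⊢
  rcases f3cases 0 i with rfl | rfl | rfl <;>
    simp only [show (0:Fin 3)+1 = 1 from by decide, show (0:Fin 3)+2 = 2 from by decide,
      vAct_self, vAct_ne (show (1:Fin 3) ≠ 0 from by decide),
      vAct_ne (show (2:Fin 3) ≠ 0 from by decide),
      vAct_ne (show (0:Fin 3) ≠ 1 from by decide),
      vAct_ne (show (2:Fin 3) ≠ 1 from by decide),
      vAct_ne (show (0:Fin 3) ≠ 2 from by decide),
      vAct_ne (show (1:Fin 3) ≠ 2 from by decide),
      show (1:Fin 3)+1 = 2 from by decide, show (1:Fin 3)+2 = 0 from by decide,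
      show (2:Fin 3)+1 = 0 from by decide, show (2:Fin 3)+2 = 1 from by decide] <;>
    linear_combination hx

end Aux

section Arith

lemma between_arith (A B u v : ℤ)
    (hu : 2 ≤ |u|) (hv : 2 ≤ |v|)
    (h1 : |A - 2*v - u| ≤ |u|) (h2 : |B - 2*u - v| ≤ |v|)
    (hA : 3*|A| < 2*|v|) (hB : 3*|B| < 2*|u|) :
    (A ≤ 2*(u+v) ∧ 2*(u+v) ≤ B) ∨ (B ≤ 2*(u+v) ∧ 2*(u+v) ≤ A) := by
  have hA1 := le_abs_self A; have hA2 := neg_abs_le A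
  have hB1 := le_abs_self B; have hB2 := neg_abs_le B
  rw [abs_le] at h1 h2
  rcases le_or_gt u 0 with h | h <;> rcases le_or_gt v 0 with h' | h'
  · rw [abs_of_nonpos h] at h1 hu hB
    rw [abs_of_nonpos h'] at h2 hv hA
    exfalso; linarith
  · rw [abs_of_nonpos h] at h1 hu hB
    rw [abs_of_pos h'] at h2 hv hA
    right; constructor <;> linarith
  · rw [abs_of_pos h] at h1 hu hB
    rw [abs_of_nonpos h'] at h2 hv hA
    left; constructor <;> linarith
  · rw [abs_of_pos h] at h1 hu hB
    rw [abs_of_pos h'] at h2 hv hA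
    exfalso; linarith

lemma key_arith (A B E u v : ℤ)
    (hu : 2 ≤ |u|) (hv : 2 ≤ |v|)
    (h1 : |A - 2*v - u| ≤ |u|) (h2 : |B - 2*u - v| ≤ |v|)
    (hA : 3*|A| < 2*|v|) (hB : 3*|B| < 2*|u|)
    (heq : (u+v)^2 = A*u + B*v + E) :
    (A = B ∧ 2*(u+v) = A) ∨ (|u| + |v| ≤ 4*(|A|+|B|)^2 + 2*|E| + (|A|+|B|)) := by
  have hbet := between_arith A B u v hu hv h1 h2 hA hB
  by_cases hAB : A = B
  · left
    refine ⟨hAB, ?_⟩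
    subst hAB
    rcases hbet with ⟨c1, c2⟩ | ⟨c1, c2⟩ <;> linarith
  · right
    have h2s : |2*(u+v)| ≤ |A| + |B| := by
      rw [abs_le]
      rcases hbet with ⟨c1, c2⟩ | ⟨c1, c2⟩ <;>
        exact ⟨by linarith [le_abs_self A, neg_abs_le A, le_abs_self B, neg_abs_le B],
          by linarith [le_abs_self A, neg_abs_le A, le_abs_self B, neg_abs_le B]⟩
    have hsM : |u+v| ≤ |A| + |B| := by
      have he : |2*(u+v)| = 2*|u+v| := by rw [abs_mul]; norm_num
      have h0 := abs_nonneg (u+v)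
      linarith
    have hveq : (B - A) * v = (u+v)^2 - A*(u+v) - E := by linear_combination -heq
    have hone : 1 ≤ |B - A| := Int.one_le_abs (sub_ne_zero.mpr (Ne.symm hAB))
    have hv2 : |v| ≤ |u+v|^2 + |A| * |u+v| + |E| := by
      calc |v| = 1 * |v| := by ring
        _ ≤ |B - A| * |v| := mul_le_mul_of_nonneg_right hone (abs_nonneg v)
        _ = |(B - A) * v| := (abs_mul _ _).symm
        _ = |(u+v)^2 - A*(u+v) - E| := by rw [hveq]
        _ ≤ |(u+v)^2 - A*(u+v)| + |E| := abs_sub _ _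
        _ ≤ |(u+v)^2| + |A*(u+v)| + |E| := by linarith [abs_sub ((u+v)^2) (A*(u+v))]
        _ = |u+v|^2 + |A| * |u+v| + |E| := by rw [abs_mul, abs_of_nonneg (sq_nonneg (u+v)), sq_abs]
    have hu2 : |u| ≤ |u+v| + |v| := by
      calc |u| = |(u+v) - v| := by ring_nf
        _ ≤ |u+v| + |v| := abs_sub _ _
    have h0A := abs_nonneg A; have h0B := abs_nonneg B
    have h0s := abs_nonneg (u+v); have h0E := abs_nonneg E
    have hsq : |u+v|^2 ≤ (|A|+|B|)^2 := by nlinarith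
    have hAs : |A| * |u+v| ≤ (|A|+|B|) * (|A|+|B|) :=
      mul_le_mul (by linarith) hsM h0s (by linarith)
    nlinarith

end Arith

section Core

lemma core_int (a1 a2 a3 b x1 x2 x3 : ℤ)
    (hV : x1^2 + x2^2 + x3^2 + x1*x2*x3 - a1*x1 - a2*x2 - a3*x3 - b = 0)
    (h2x1 : 2 ≤ |x1|) (h2x2 : 2 ≤ |x2|) (h2x3 : 2 ≤ |x3|)
    (hN1 : 3*|a1| < |x2*x3|) (hN3 : 3*|a3| < |x1*x2|)
    (h1 : |a1 - x2*x3 - x1| ≤ |x1|) (h3 : |a3 - x1*x2 - x3| ≤ |x3|) :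
    |x1| + |x2| + |x3| ≤ 7*(|a1|+|a2|+|a3|+|b|+10)^2 ∨
    ∃ ε : ℤ, (ε = 1 ∨ ε = -1) ∧ x2 = 2*ε ∧ 2*(x1 + ε*x3) = a1 ∧ a1 = ε*a3 := by
  -- Step 1 : |x2| = 2
  have hP1 : |x2*x3 - a1| ≤ 2*|x1| := by
    have hh := abs_add_le (a1 - x2*x3 - x1) x1
    rw [show a1 - x2*x3 - x1 + x1 = -(x2*x3 - a1) from by ring, abs_neg] at hh
    linarith
  have hP3 : |x1*x2 - a3| ≤ 2*|x3| := by
    have hh := abs_add_le (a3 - x1*x2 - x3) x3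
    rw [show a3 - x1*x2 - x3 + x3 = -(x1*x2 - a3) from by ring, abs_neg] at hh
    linarith
  have hs2 : |x2| * |x3| < 3*|x1| := by
    have hh := abs_add_le (x2*x3 - a1) a1
    rw [show x2*x3 - a1 + a1 = x2*x3 from by ring] at hh
    rw [← abs_mul]; linarith
  have hs3 : |x1| * |x2| < 3*|x3| := by
    have hh := abs_add_le (x1*x2 - a3) a3
    rw [show x1*x2 - a3 + a3 = x1*x2 from by ring] at hh
    rw [← abs_mul]; linarith
  have hb2 : |x2| = 2 := by
    refine le_antisymm ?_ h2x2
    by_contra hcon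
    push_neg at hcon
    have hb3 : 3 ≤ |x2| := hcon
    have c0 : (0:ℤ) ≤ |x3| := abs_nonneg x3
    have a0 : (0:ℤ) ≤ |x1| := abs_nonneg x1
    have e1 : 3*|x3| ≤ |x2| * |x3| := mul_le_mul_of_nonneg_right hb3 c0
    have e2 : 3*|x1| ≤ |x1| * |x2| := by
      have := mul_le_mul_of_nonneg_right hb3 a0
      linarith [this]
    linarith
  obtain ⟨ε, hε, hx2⟩ : ∃ ε:ℤ, (ε = 1 ∨ ε = -1) ∧ x2 = 2*ε := by
    rcases (abs_eq (by norm_num : (0:ℤ) ≤ 2)).mp hb2 with h | h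
    · exact ⟨1, Or.inl rfl, by linarith⟩
    · exact ⟨-1, Or.inr rfl, by linarith⟩
  subst hx2
  have hε2 : ε*ε = 1 := by rcases hε with rfl | rfl <;> norm_num
  have habsε : |ε| = 1 := by rcases hε with rfl | rfl <;> norm_num
  have hvx : |ε*x3| = |x3| := by rw [abs_mul, habsε, one_mul]
  have hva : |ε*a3| = |a3| := by rw [abs_mul, habsε, one_mul]
  have h2v : 2 ≤ |ε*x3| := by rw [hvx]; exact h2x3
  have h1' : |a1 - 2*(ε*x3) - x1| ≤ |x1| := by
    rw [show a1 - 2*(ε*x3) - x1 = a1 - 2*ε*x3 - x1 from by ring]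
    exact h1
  have h2' : |ε*a3 - 2*x1 - ε*x3| ≤ |ε*x3| := by
    have he : ε*a3 - 2*x1 - ε*x3 = ε*(a3 - x1*(2*ε) - x3) := by
      linear_combination (2*x1)*hε2
    rw [he, abs_mul, habsε, one_mul, hvx]
    exact h3
  have hA' : 3*|a1| < 2*|ε*x3| := by
    have : |2*ε*x3| = 2*|ε*x3| := by
      rw [show 2*ε*x3 = 2*(ε*x3) from by ring, abs_mul]; norm_num
    rw [← this]; exact hN1
  have hB' : 3*|ε*a3| < 2*|x1| := by
    rw [hva]
    have : |x1*(2*ε)| = 2*|x1| := by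
      rw [abs_mul, show |(2*ε)| = 2 from by rw [abs_mul, habsε]; norm_num]
      ring
    linarith [hN3, this.symm.le, this.le]
  have heq : (x1 + ε*x3)^2 = a1*x1 + (ε*a3)*(ε*x3) + (b + 2*ε*a2 - 4) := by
    linear_combination hV + (x3^2 - a3*x3 - 4) * hε2
  rcases key_arith a1 (ε*a3) (b + 2*ε*a2 - 4) x1 (ε*x3) h2x1 h2v h1' h2' hA' hB' heq with
    ⟨hAB, hsum⟩ | hbnd
  · exact Or.inr ⟨ε, hε, rfl, by linarith [hsum], hAB⟩
  · left
    rw [hvx, hva] at hbnd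
    have hE : |b + 2*ε*a2 - 4| ≤ |b| + 2*|a2| + 4 := by
      have e1 : |b + 2*ε*a2 - 4| ≤ |b + 2*ε*a2| + |(4:ℤ)| := abs_sub _ _
      have e2 : |b + 2*ε*a2| ≤ |b| + |2*ε*a2| := abs_add_le _ _
      have e3 : |2*ε*a2| = 2*|a2| := by
        rw [show 2*ε*a2 = 2*(ε*a2) from by ring, abs_mul, abs_mul, habsε]
        norm_num
      rw [e3] at e2
      norm_num at e1
      linarith
    have hb22 : |2*ε| = 2 := by rw [abs_mul, habsε]; norm_num
    -- now conclude with K = |a1|+|a2|+|a3|+|b|+10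
    have hK : (10:ℤ) ≤ |a1|+|a2|+|a3|+|b|+10 := by
      linarith [abs_nonneg a1, abs_nonneg a2, abs_nonneg a3, abs_nonneg b]
    set K : ℤ := |a1|+|a2|+|a3|+|b|+10 with hKdef
    have hK10 : 10*K ≤ K*K := mul_le_mul_of_nonneg_right hK (by linarith)
    have hK13 : |a1| + |a3| ≤ K := by
      linarith [abs_nonneg a2, abs_nonneg b]
    have hKsq : (|a1|+|a3|)*(|a1|+|a3|) ≤ K*K :=
      mul_le_mul hK13 hK13 (by linarith [abs_nonneg a1, abs_nonneg a3]) (by linarith)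
    rw [hb22]
    have e : (|a1|+|a3|)^2 ≤ K^2 := by rw [sq, sq]; exact hKsq
    have hK10' : 10*K ≤ K^2 := by rw [sq]; exact hK10
    linarith [hbnd, hE, e, hK10', sq_nonneg K, hK, abs_nonneg a1, abs_nonneg a2,
      abs_nonneg a3, abs_nonneg b]
end Core

section Indexed

variable {α : Fin 3 → ℤ} {β : ℤ}

def NiceBig (α : Fin 3 → ℤ) (y : Fin 3 → ℤ) : Prop :=
  (∀ e : Fin 3, 2 ≤ |y e|) ∧ ∀ e : Fin 3, max (3*|α e|) 4 < |y (e+1) * y (e+2)|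

def bigC (α : Fin 3 → ℤ) (β : ℤ) : ℤ := 7*(|α 0|+|α 1|+|α 2|+|β|+10)^2

def lineP (α : Fin 3 → ℤ) (b : Fin 3) (ε : ℤ) (y : Fin 3 → ℤ) : Prop :=
  y b = 2*ε ∧ 2*(y (b+1) + ε * y (b+2)) = α (b+1) ∧ α (b+1) = ε * α (b+2)

lemma niceBig_of_not_inT {y : Fin 3 → ℤ} (hV : onV α β y) (h : ¬ inT α β y) :
    NiceBig α y := by
  constructor
  · intro e
    by_contra hcon
    push_neg at hcon
    refine h ⟨hV, Equiv.addLeft e, Or.inl ?_⟩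
    simpa using by linarith
  · intro e
    by_contra hcon
    push_neg at hcon
    refine h ⟨hV, Equiv.addLeft e, Or.inr ?_⟩
    simpa using hcon

lemma delta_vAct_le {y : Fin 3 → ℤ} {i : Fin 3} :
    delta (vAct α i y) ≤ delta y ↔ |α i - y (i+1) * y (i+2) - y i| ≤ |y i| := by
  rw [delta_vAct]; constructor <;> intro <;> linarith

lemma core_indexed {w : Fin 3 → ℤ} (hV : onV α β w) (hN : NiceBig α w)
    (a c : Fin 3) (hac : a ≠ c)
    (ha : delta (vAct α a w) ≤ delta w) (hc : delta (vAct α c w) ≤ delta w) :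
    delta w ≤ bigC α β ∨
      ∃ b ε, (b ≠ a ∧ b ≠ c) ∧ (ε = 1 ∨ ε = -1) ∧ lineP α b ε w := by
  have ha' := delta_vAct_le.mp ha
  have hc' := delta_vAct_le.mp hc
  have hprod : ∀ e : Fin 3, 3*|α e| < |w (e+1) * w (e+2)| :=
    fun e => lt_of_le_of_lt (le_max_left _ _) (hN.2 e)
  have e01 : (0:Fin 3)+1 = 1 := by decide
  have e02 : (0:Fin 3)+2 = 2 := by decide
  have e11 : (1:Fin 3)+1 = 2 := by decide
  have e12 : (1:Fin 3)+2 = 0 := by decide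
  have e21 : (2:Fin 3)+1 = 0 := by decide
  have e22 : (2:Fin 3)+2 = 1 := by decide
  rcases f3cases 0 a with rfl | rfl | rfl <;> rcases f3cases 0 c with rfl | rfl | rfl <;>
    simp only [e01, e02, e11, e12, e21, e22] at ha' hc' hac ⊢
  · exact absurd rfl hac
  · have H := core_int (α 0) (α 2) (α 1) β (w 0) (w 2) (w 1)
      (by unfold onV at hV; linear_combination hV)
      (hN.1 0) (hN.1 2) (hN.1 1)
      (by have hp := hprod 0; simp only [e01, e02, e11, e12, e21, e22] at hp; rw [mul_comm (w 2) (w 1)]; exact hp)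
      (by have hp := hprod 1; simp only [e01, e02, e11, e12, e21, e22] at hp; rw [mul_comm (w 0) (w 2)]; exact hp)
      (by rw [mul_comm (w 2) (w 1)]; exact ha')
      (by rw [mul_comm (w 0) (w 2)]; exact hc')
    rcases H with hb | ⟨ε, hε, hx2, hl1, hl2⟩
    · left
      unfold delta bigC
      have hr : (|α 0|+|α 2|+|α 1|+|β|+10)^2 = (|α 0|+|α 1|+|α 2|+|β|+10)^2 := by ring
      linarith [hb, hr.ge, hr.le]
    · refine Or.inr ⟨2, ε, ⟨by decide, by decide⟩, hε, hx2, ?_, ?_⟩ <;>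
        simp only [e01, e02, e11, e12, e21, e22]
      · exact hl1
      · exact hl2
  · have H := core_int (α 0) (α 1) (α 2) β (w 0) (w 1) (w 2)
      (by unfold onV at hV; linear_combination hV)
      (hN.1 0) (hN.1 1) (hN.1 2)
      (by have hp := hprod 0; simp only [e01, e02, e11, e12, e21, e22] at hp; exact hp)
      (by have hp := hprod 2; simp only [e01, e02, e11, e12, e21, e22] at hp; exact hp)
      (by exact ha')
      (by exact hc')
    rcases H with hb | ⟨ε, hε, hx2, hl1, hl2⟩
    · left
      unfold delta bigC
      have hr : (|α 0|+|α 1|+|α 2|+|β|+10)^2 = (|α 0|+|α 1|+|α 2|+|β|+10)^2 := by ring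
      linarith [hb, hr.ge, hr.le]
    · refine Or.inr ⟨1, ε, ⟨by decide, by decide⟩, hε, hx2, ?_, ?_⟩ <;>
        simp only [e01, e02, e11, e12, e21, e22]
      · rcases hε with rfl | rfl <;> linarith
      · rcases hε with rfl | rfl <;> linarith
  · have H := core_int (α 1) (α 2) (α 0) β (w 1) (w 2) (w 0)
      (by unfold onV at hV; linear_combination hV)
      (hN.1 1) (hN.1 2) (hN.1 0)
      (by have hp := hprod 1; simp only [e01, e02, e11, e12, e21, e22] at hp; exact hp)
      (by have hp := hprod 0; simp only [e01, e02, e11, e12, e21, e22] at hp; exact hp)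
      (by exact ha')
      (by exact hc')
    rcases H with hb | ⟨ε, hε, hx2, hl1, hl2⟩
    · left
      unfold delta bigC
      have hr : (|α 1|+|α 2|+|α 0|+|β|+10)^2 = (|α 0|+|α 1|+|α 2|+|β|+10)^2 := by ring
      linarith [hb, hr.ge, hr.le]
    · refine Or.inr ⟨2, ε, ⟨by decide, by decide⟩, hε, hx2, ?_, ?_⟩ <;>
        simp only [e01, e02, e11, e12, e21, e22]
      · rcases hε with rfl | rfl <;> linarith
      · rcases hε with rfl | rfl <;> linarith
  · exact absurd rfl hac
  · have H := core_int (α 1) (α 0) (α 2) β (w 1) (w 0) (w 2)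
      (by unfold onV at hV; linear_combination hV)
      (hN.1 1) (hN.1 0) (hN.1 2)
      (by have hp := hprod 1; simp only [e01, e02, e11, e12, e21, e22] at hp; rw [mul_comm (w 0) (w 2)]; exact hp)
      (by have hp := hprod 2; simp only [e01, e02, e11, e12, e21, e22] at hp; rw [mul_comm (w 1) (w 0)]; exact hp)
      (by rw [mul_comm (w 0) (w 2)]; exact ha')
      (by rw [mul_comm (w 1) (w 0)]; exact hc')
    rcases H with hb | ⟨ε, hε, hx2, hl1, hl2⟩
    · left
      unfold delta bigC
      have hr : (|α 1|+|α 0|+|α 2|+|β|+10)^2 = (|α 0|+|α 1|+|α 2|+|β|+10)^2 := by ring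
      linarith [hb, hr.ge, hr.le]
    · refine Or.inr ⟨0, ε, ⟨by decide, by decide⟩, hε, hx2, ?_, ?_⟩ <;>
        simp only [e01, e02, e11, e12, e21, e22]
      · exact hl1
      · exact hl2
  · have H := core_int (α 2) (α 1) (α 0) β (w 2) (w 1) (w 0)
      (by unfold onV at hV; linear_combination hV)
      (hN.1 2) (hN.1 1) (hN.1 0)
      (by have hp := hprod 2; simp only [e01, e02, e11, e12, e21, e22] at hp; rw [mul_comm (w 1) (w 0)]; exact hp)
      (by have hp := hprod 0; simp only [e01, e02, e11, e12, e21, e22] at hp; rw [mul_comm (w 2) (w 1)]; exact hp)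
      (by rw [mul_comm (w 1) (w 0)]; exact ha')
      (by rw [mul_comm (w 2) (w 1)]; exact hc')
    rcases H with hb | ⟨ε, hε, hx2, hl1, hl2⟩
    · left
      unfold delta bigC
      have hr : (|α 2|+|α 1|+|α 0|+|β|+10)^2 = (|α 0|+|α 1|+|α 2|+|β|+10)^2 := by ring
      linarith [hb, hr.ge, hr.le]
    · refine Or.inr ⟨1, ε, ⟨by decide, by decide⟩, hε, hx2, ?_, ?_⟩ <;>
        simp only [e01, e02, e11, e12, e21, e22]
      · exact hl1
      · exact hl2
  · have H := core_int (α 2) (α 0) (α 1) β (w 2) (w 0) (w 1)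
      (by unfold onV at hV; linear_combination hV)
      (hN.1 2) (hN.1 0) (hN.1 1)
      (by have hp := hprod 2; simp only [e01, e02, e11, e12, e21, e22] at hp; exact hp)
      (by have hp := hprod 1; simp only [e01, e02, e11, e12, e21, e22] at hp; exact hp)
      (by exact ha')
      (by exact hc')
    rcases H with hb | ⟨ε, hε, hx2, hl1, hl2⟩
    · left
      unfold delta bigC
      have hr : (|α 2|+|α 0|+|α 1|+|β|+10)^2 = (|α 0|+|α 1|+|α 2|+|β|+10)^2 := by ring
      linarith [hb, hr.ge, hr.le]
    · refine Or.inr ⟨0, ε, ⟨by decide, by decide⟩, hε, hx2, ?_, ?_⟩ <;>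
        simp only [e01, e02, e11, e12, e21, e22]
      · rcases hε with rfl | rfl <;> linarith
      · rcases hε with rfl | rfl <;> linarith
  · exact absurd rfl hac

end Indexed

section Line

variable {α : Fin 3 → ℤ} {β : ℤ}

lemma delta_cyc (y : Fin 3 → ℤ) (b : Fin 3) :
    delta y = |y b| + |y (b+1)| + |y (b+2)| := by
  rcases f3cases 0 b with rfl | rfl | rfl <;>
    simp only [show (0:Fin 3)+1 = 1 from by decide, show (0:Fin 3)+2 = 2 from by decide,
      show (1:Fin 3)+1 = 2 from by decide, show (1:Fin 3)+2 = 0 from by decide,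
      show (2:Fin 3)+1 = 0 from by decide, show (2:Fin 3)+2 = 1 from by decide] <;>
    unfold delta <;> ring

lemma line_fix1 {b : Fin 3} {ε : ℤ} {y : Fin 3 → ℤ}
    (hL : lineP α b ε y) (hε : ε = 1 ∨ ε = -1) : vAct α (b+1) y = y := by
  funext e
  by_cases h : e = b + 1
  · subst h
    rw [vAct_self, f311, f312, hL.1]
    rcases hε with rfl | rfl <;> [skip; skip] <;>
      linarith [hL.2.1, hL.2.2]
  · rw [vAct_ne h]

lemma line_fix2 {b : Fin 3} {ε : ℤ} {y : Fin 3 → ℤ}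
    (hL : lineP α b ε y) (hε : ε = 1 ∨ ε = -1) : vAct α (b+2) y = y := by
  funext e
  by_cases h : e = b + 2
  · subst h
    rw [vAct_self, f321, f322, hL.1]
    rcases hε with rfl | rfl <;> [skip; skip] <;>
      linarith [hL.2.1, hL.2.2]
  · rw [vAct_ne h]

lemma line_delta_inc {b : Fin 3} {ε : ℤ} {y : Fin 3 → ℤ}
    (hL : lineP α b ε y) (hε : ε = 1 ∨ ε = -1)
    (hbig : |α b| + 4 < |y (b+1) * y (b+2)|) : delta y < delta (vAct α b y) := by
  rw [delta_vAct]
  have t0 : |y b| = 2 := by rw [hL.1]; rcases hε with rfl | rfl <;> norm_num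
  have u1 := abs_sub (α b - y b) (α b - y (b+1) * y (b+2) - y b)
  rw [show α b - y b - (α b - y (b+1) * y (b+2) - y b) = y (b+1) * y (b+2) from by ring] at u1
  have u2 := abs_sub (α b) (y b)
  linarith

lemma line_near_finite (b : Fin 3) (ε N : ℤ) (hε : ε = 1 ∨ ε = -1) :
    {p : Fin 3 → ℤ | lineP α b ε p ∧ |p (b+1)| ≤ N}.Finite := by
  have hinj : Set.InjOn (fun p : Fin 3 → ℤ => p (b+1))
      {p | lineP α b ε p ∧ |p (b+1)| ≤ N} := by
    rintro p ⟨hp, -⟩ q ⟨hq, -⟩ hpq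
    simp only at hpq
    funext e
    rcases f3cases b e with rfl | rfl | rfl
    · rw [hp.1, hq.1]
    · exact hpq
    · have h1 := hp.2.1
      have h2 := hq.2.1
      rcases hε with rfl | rfl <;> linarith
  refine Set.Finite.of_finite_image ?_ hinj
  refine (Set.finite_Icc (-N) N).subset ?_
  rintro t ⟨p, ⟨-, hN⟩, rfl⟩
  exact Set.mem_Icc.mpr (abs_le.mp hN)

lemma alpha_le (e : Fin 3) : |α e| + 10 ≤ |α 0| + |α 1| + |α 2| + |β| + 10 := by
  rcases f3cases 0 e with rfl | rfl | rfl
  · linarith [abs_nonneg (α 0), abs_nonneg (α 1), abs_nonneg (α 2), abs_nonneg β]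
  · rw [show (0:Fin 3)+1 = 1 from by decide]
    linarith [abs_nonneg (α 0), abs_nonneg (α 1), abs_nonneg (α 2), abs_nonneg β]
  · rw [show (0:Fin 3)+2 = 2 from by decide]
    linarith [abs_nonneg (α 0), abs_nonneg (α 1), abs_nonneg (α 2), abs_nonneg β]

lemma far_facts {b : Fin 3} {ε : ℤ} {p : Fin 3 → ℤ}
    (hL : lineP α b ε p) (hε : ε = 1 ∨ ε = -1)
    (hfar : 2 * bigC α β ≤ |p (b+1)|) :
    NiceBig α p ∧ bigC α β < delta p ∧ delta p < delta (vAct α b p) := by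
  set K : ℤ := |α 0| + |α 1| + |α 2| + |β| + 10 with hK
  have hK10 : 10 ≤ K := by
    rw [hK]; linarith [abs_nonneg (α 0), abs_nonneg (α 1), abs_nonneg (α 2), abs_nonneg β]
  have hCst : bigC α β = 7*K^2 := rfl
  have hCK : 70*K ≤ bigC α β := by rw [hCst]; nlinarith
  have hC0 : 700 ≤ bigC α β := by linarith
  have hαK : ∀ e, |α e| ≤ K - 10 := by
    intro e; have := alpha_le (α := α) (β := β) e; rw [← hK] at this; linarith
  have hpb : |p b| = 2 := by rw [hL.1]; rcases hε with rfl | rfl <;> norm_num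
  have hb2 : bigC α β ≤ |p (b+2)| := by
    have h1 := hL.2.1
    have h2 : |2*ε*p (b+2)| = 2*|p (b+2)| := by
      rw [show 2*ε*p (b+2) = 2*(ε * p (b+2)) from by ring, abs_mul, abs_mul]
      rcases hε with rfl | rfl <;> norm_num
    have h3 : |α (b+1) - 2*p (b+1)| ≤ |2*ε*p (b+2)| + 0 := by
      rw [show α (b+1) - 2*p (b+1) = 2*ε*p (b+2) + 0 from by linarith, add_zero, add_zero]
    have h4 : 2*|p (b+1)| - |α (b+1)| ≤ |α (b+1) - 2*p (b+1)| := by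
      have h5 : |2*p (b+1)| = 2*|p (b+1)| := by rw [abs_mul]; norm_num
      have h6 := abs_add_le (2*p (b+1) - α (b+1)) (α (b+1))
      rw [show 2*p (b+1) - α (b+1) + α (b+1) = 2*p (b+1) from by ring,
        abs_sub_comm (2*p (b+1)) (α (b+1))] at h6
      linarith
    have := hαK (b+1)
    linarith
  have hprod : 2 * bigC α β * bigC α β ≤ |p (b+1)| * |p (b+2)| :=
    mul_le_mul hfar hb2 (by linarith) (abs_nonneg _)
  have hCsq : bigC α β ≤ 2 * bigC α β * bigC α β := by nlinarith
  have hcoord : ∀ e, 2 ≤ |p e| := by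
    intro e
    rcases f3cases b e with rfl | rfl | rfl
    · rw [hpb]
    · linarith
    · linarith
  have hN : NiceBig α p := by
    refine ⟨hcoord, ?_⟩
    intro e
    rw [max_lt_iff, abs_mul]
    rcases f3cases b e with rfl | rfl | rfl
    · constructor
      · have := hαK e; nlinarith
      · nlinarith
    · rw [f311, f312]
      have hh : 2*|p (b+2)| ≤ |p (b+2)| * |p b| := by rw [hpb]; nlinarith [abs_nonneg (p (b+2))]
      have := hαK (b+1)
      constructor <;> nlinarith
    · rw [f321, f322]
      have hh : 2*|p (b+1)| ≤ |p b| * |p (b+1)| := by rw [hpb]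
      have := hαK (b+2)
      constructor <;> nlinarith
  refine ⟨hN, ?_, ?_⟩
  · rw [delta_cyc p b]; linarith
  · refine line_delta_inc hL hε ?_
    rw [abs_mul]
    have := hαK b
    nlinarith

end Line

section UpSec

variable {α : Fin 3 → ℤ} {β : ℤ}

inductive UpR (α : Fin 3 → ℤ) (z : Fin 3 → ℤ) : (Fin 3 → ℤ) → Prop
  | base : UpR α z z
  | step (y : Fin 3 → ℤ) (a : Fin 3) :
      UpR α z y → delta y < delta (vAct α a y) → UpR α z (vAct α a y)

lemma up_invariant {z y : Fin 3 → ℤ} (hVz : onV α β z) (hNz : NiceBig α z)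
    (hCz : bigC α β < delta z) (h : UpR α z y) :
    onV α β y ∧ NiceBig α y ∧ bigC α β < delta y ∧
      (y = z ∨ ∃ c w, UpR α z w ∧ y = vAct α c w ∧ delta w < delta y) := by
  induction h with
  | base => exact ⟨hVz, hNz, hCz, Or.inl rfl⟩
  | step y a hUp hinc IH =>
    obtain ⟨hVy, hNy, hCy, -⟩ := IH
    have hlt : |y a| < |vAct α a y a| := by
      rw [vAct_self]
      have hd := delta_vAct (α := α) a y
      linarith
    refine ⟨onV_vAct a hVy, ⟨?_, ?_⟩, by linarith, Or.inr ⟨a, y, hUp, rfl, hinc⟩⟩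
    · intro e
      rcases f3cases a e with rfl | rfl | rfl
      · linarith [hNy.1 e]
      · rw [vAct_ne (f3n1 a)]; exact hNy.1 _
      · rw [vAct_ne (f3n2 a)]; exact hNy.1 _
    · intro e
      rcases f3cases a e with rfl | rfl | rfl
      · rw [vAct_ne (f3n1 e), vAct_ne (f3n2 e)]
        exact hNy.2 e
      · have hI := hNy.2 (a+1)
        rw [f311, f312] at hI ⊢
        rw [vAct_ne (f3n2 a), abs_mul]
        rw [abs_mul] at hI
        exact lt_of_lt_of_le hI (mul_le_mul_of_nonneg_left hlt.le (abs_nonneg _))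
      · have hI := hNy.2 (a+2)
        rw [f321, f322] at hI ⊢
        rw [vAct_ne (f3n1 a), abs_mul]
        rw [abs_mul] at hI
        exact lt_of_lt_of_le hI (mul_le_mul_of_nonneg_right hlt.le (abs_nonneg _))

lemma cthird : ∀ b' a c : Fin 3, a ≠ c → b' ≠ a → b' ≠ c →
    c = b' + 1 ∨ c = b' + 2 := by decide

lemma up_closure {b : Fin 3} {ε : ℤ} {z : Fin 3 → ℤ}
    (hVz : onV α β z) (hL : lineP α b ε z) (hε : ε = 1 ∨ ε = -1)
    (hfar : 2 * bigC α β ≤ |z (b+1)|) :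
    ∀ y, UpR α z y → ∀ a, UpR α z (vAct α a y) := by
  obtain ⟨hNz, hCz, hIz⟩ := far_facts (β := β) hL hε hfar
  intro y hy
  induction hy with
  | base =>
    intro a
    rcases f3cases b a with rfl | rfl | rfl
    · exact UpR.step z a UpR.base hIz
    · rw [line_fix1 hL hε]; exact UpR.base
    · rw [line_fix2 hL hε]; exact UpR.base
  | step y c hUp hinc IH =>
    intro a
    by_cases hac : a = c
    · subst hac; rw [vAct_invol]; exact hUp
    · have hw := up_invariant hVz hNz hCz (UpR.step y c hUp hinc)
      have hdec : delta (vAct α c (vAct α c y)) < delta (vAct α c y) := by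
        rw [vAct_invol]; exact hinc
      by_cases hle : delta (vAct α a (vAct α c y)) ≤ delta (vAct α c y)
      · exfalso
        rcases core_indexed hw.1 hw.2.1 a c hac hle hdec.le with
          hbd | ⟨b', ε', ⟨hba, hbc⟩, hε', hL'⟩
        · linarith [hw.2.2.1]
        · rcases cthird b' a c hac hba hbc with h | h
          · subst h
            rw [line_fix1 hL' hε'] at hdec
            exact lt_irrefl _ hdec
          · subst h
            rw [line_fix2 hL' hε'] at hdec
            exact lt_irrefl _ hdec
      · push_neg at hle
        exact UpR.step _ a (UpR.step y c hUp hinc) hle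

lemma foldl_cancel (L : List (Fin 3)) (x : Fin 3 → ℤ) :
    (L.reverse).foldl (fun z i => vAct α i z) (L.foldl (fun z i => vAct α i z) x) = x := by
  induction L generalizing x with
  | nil => rfl
  | cons a L ih =>
    simp only [List.reverse_cons, List.foldl_append, List.foldl_cons, List.foldl_nil]
    rw [ih (vAct α a x), vAct_invol]

lemma gammaRel_single (x : Fin 3 → ℤ) (a : Fin 3) : gammaRel α x (vAct α a x) :=
  ⟨[a], rfl⟩

lemma gammaRel_trans {x y w : Fin 3 → ℤ} (h1 : gammaRel α x y) (h2 : gammaRel α y w) :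
    gammaRel α x w := by
  obtain ⟨L1, rfl⟩ := h1
  obtain ⟨L2, rfl⟩ := h2
  exact ⟨L1 ++ L2, by rw [List.foldl_append]⟩

lemma gammaRel_symm {x y : Fin 3 → ℤ} (h : gammaRel α x y) : gammaRel α y x := by
  obtain ⟨L, rfl⟩ := h
  exact ⟨L.reverse, (foldl_cancel L x).symm⟩

lemma onV_foldl : ∀ (L : List (Fin 3)) (x : Fin 3 → ℤ), onV α β x →
    onV α β (L.foldl (fun z i => vAct α i z) x) := by
  intro L
  induction L with
  | nil => exact fun _ hx => hx
  | cons a L ih => exact fun x hx => ih (vAct α a x) (onV_vAct a hx)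

lemma onV_gammaRel {x y : Fin 3 → ℤ} (hx : onV α β x) (h : gammaRel α x y) :
    onV α β y := by
  obtain ⟨L, rfl⟩ := h
  exact onV_foldl L x hx

lemma up_of_gammaRel {b : Fin 3} {ε : ℤ} {z y : Fin 3 → ℤ}
    (hVz : onV α β z) (hL : lineP α b ε z) (hε : ε = 1 ∨ ε = -1)
    (hfar : 2 * bigC α β ≤ |z (b+1)|) (h : gammaRel α z y) : UpR α z y := by
  obtain ⟨L, rfl⟩ := h
  induction L using List.reverseRecOn with
  | nil => exact UpR.base
  | append_singleton L a ih =>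
    rw [List.foldl_append, List.foldl_cons, List.foldl_nil]
    exact up_closure hVz hL hε hfar _ ih a

lemma far_unique {b : Fin 3} {ε : ℤ} {p q : Fin 3 → ℤ}
    (hVp : onV α β p) (hLp : lineP α b ε p) (hε : ε = 1 ∨ ε = -1)
    (hfp : 2 * bigC α β ≤ |p (b+1)|)
    (hLq : lineP α b ε q) (hfq : 2 * bigC α β ≤ |q (b+1)|)
    (h : gammaRel α p q) : q = p := by
  have hU := up_of_gammaRel hVp hLp hε hfp h
  obtain ⟨hNp, hCp, -⟩ := far_facts (β := β) hLp hε hfp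
  rcases (up_invariant hVp hNp hCp hU).2.2.2 with h' | ⟨c, w, -, rfl, hdlt⟩
  · exact h'
  · exfalso
    obtain ⟨-, -, hIq⟩ := far_facts (β := β) hLq hε hfq
    rcases f3cases b c with rfl | rfl | rfl
    · rw [vAct_invol] at hIq
      linarith
    · have hfx := line_fix1 hLq hε
      rw [vAct_invol] at hfx
      rw [← hfx] at hdlt
      exact lt_irrefl _ hdlt
    · have hfx := line_fix2 hLq hε
      rw [vAct_invol] at hfx
      rw [← hfx] at hdlt
      exact lt_irrefl _ hdlt

end UpSec

section Fin3Fin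

variable {α : Fin 3 → ℤ} {β : ℤ}

def bigK (α : Fin 3 → ℤ) (β : ℤ) : ℤ := |α 0| + |α 1| + |α 2| + |β| + 10

lemma bigK_ge : 10 ≤ bigK α β := by
  unfold bigK
  linarith [abs_nonneg (α 0), abs_nonneg (α 1), abs_nonneg (α 2), abs_nonneg β]

lemma bigC_nonneg : 0 ≤ bigC α β := by
  unfold bigC
  positivity

lemma finite_deltaLe (R : ℤ) : {y : Fin 3 → ℤ | delta y ≤ R}.Finite := by
  refine (Set.Finite.pi (fun _ : Fin 3 => Set.finite_Icc (-R) R)).subset ?_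
  intro y hy i _
  exact Set.mem_Icc.mpr (abs_le.mp (le_trans (abs_le_delta y i) hy))

def twoStep (α : Fin 3 → ℤ) (p : Fin 3 → ℤ) : Set (Fin 3 → ℤ) :=
  ({p} ∪ Set.range (fun i : Fin 3 => vAct α i p)) ∪
    Set.range (fun q : Fin 3 × Fin 3 => vAct α q.2 (vAct α q.1 p))

lemma twoStep_finite (p : Fin 3 → ℤ) : (twoStep α p).Finite :=
  (((Set.finite_singleton p).union (Set.finite_range _)).union (Set.finite_range _))

lemma gammaRel_of_twoStep {p y : Fin 3 → ℤ} (h : y ∈ twoStep α p) : gammaRel α p y := by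
  rcases h with (h | h) | h
  · rw [Set.mem_singleton_iff] at h
    subst h
    exact ⟨[], rfl⟩
  · obtain ⟨i, rfl⟩ := h
    exact gammaRel_single p i
  · obtain ⟨q, rfl⟩ := h
    exact ⟨[q.1, q.2], rfl⟩

lemma sq_add_mono {x y K : ℤ} (h0 : 0 ≤ x) (hK : 0 ≤ K) (hxy : x ≤ y) :
    (x + K)^2 ≤ (y + K)^2 := by nlinarith

lemma le_sq_add {x K : ℤ} (h0 : 0 ≤ x) (hK : 1 ≤ K) : x ≤ (x + K)^2 := by nlinarith

lemma delta_vAct_bound (i : Fin 3) (q : Fin 3 → ℤ) :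
    delta (vAct α i q) ≤ (delta q + bigK α β)^2 := by
  rw [delta_vAct]
  have t1 : |α i - q (i+1) * q (i+2) - q i| ≤ |α i| + |q (i+1) * q (i+2)| + |q i| := by
    have u1 := abs_sub (α i - q (i+1) * q (i+2)) (q i)
    have u2 := abs_sub (α i) (q (i+1) * q (i+2))
    linarith
  have t2 : |q (i+1) * q (i+2)| ≤ delta q * delta q := by
    rw [abs_mul]
    exact mul_le_mul (abs_le_delta q _) (abs_le_delta q _) (abs_nonneg _) (delta_nonneg _)
  have t3 : |α i| + 10 ≤ bigK α β := alpha_le (β := β) i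
  have t4 := delta_nonneg q
  have hK := bigK_ge (α := α) (β := β)
  have t5 : delta q * 10 ≤ delta q * bigK α β := mul_le_mul_of_nonneg_left hK t4
  nlinarith [abs_nonneg (q i)]

def epsOf (s : Bool) : ℤ := if s then 1 else -1

lemma epsOf_pm (s : Bool) : epsOf s = 1 ∨ epsOf s = -1 := by
  cases s <;> simp [epsOf]

lemma exists_epsOf {ε : ℤ} (hε : ε = 1 ∨ ε = -1) : ∃ s : Bool, epsOf s = ε := by
  rcases hε with rfl | rfl
  · exact ⟨true, rfl⟩
  · exact ⟨false, rfl⟩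

def nearSet (α : Fin 3 → ℤ) (β : ℤ) (q : Fin 3 × Bool) : Set (Fin 3 → ℤ) :=
  {p | lineP α q.1 (epsOf q.2) p ∧ |p (q.1+1)| ≤ 2 * bigC α β}

def farOrb (α : Fin 3 → ℤ) (β : ℤ) (x : Fin 3 → ℤ) (q : Fin 3 × Bool) :
    Set (Fin 3 → ℤ) :=
  {p | lineP α q.1 (epsOf q.2) p ∧ 2 * bigC α β ≤ |p (q.1+1)| ∧ gammaRel α x p}

lemma nearSet_finite (q : Fin 3 × Bool) : (nearSet α β q).Finite :=
  line_near_finite q.1 (epsOf q.2) (2 * bigC α β) (epsOf_pm q.2)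

lemma farOrb_finite {x : Fin 3 → ℤ} (hx : onV α β x) (q : Fin 3 × Bool) :
    (farOrb α β x q).Finite := by
  apply Set.Subsingleton.finite
  rintro p ⟨hLp, hfp, hop⟩ p' ⟨hLp', hfp', hop'⟩
  have hVp : onV α β p := onV_gammaRel hx hop
  exact (far_unique hVp hLp (epsOf_pm q.2) hfp hLp' hfp'
    (gammaRel_trans (gammaRel_symm hop) hop')).symm

end Fin3Fin

/-- Every `Γ`-orbit, hence every `Γ₀`-orbit, contains at most finitely many
points of `𝔘'`. -/
theorem cor_3_6 (α : Fin 3 → ℤ) (β : ℤ) (x : Fin 3 → ℤ)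
    (hx : onV α β x) :
    {y | gammaRel α x y ∧ inU' α β y}.Finite ∧
    {y | gamma0Rel α x y ∧ inU' α β y}.Finite := by
  have hK10 : (10:ℤ) ≤ bigK α β := bigK_ge
  have hC0 : (0:ℤ) ≤ bigC α β := bigC_nonneg
  set R : ℤ := ((bigC α β + bigK α β)^2 + bigK α β)^2 with hR
  have main : {y | gammaRel α x y ∧ inU' α β y}.Finite := by
    have hbig : ({y : Fin 3 → ℤ | delta y ≤ R} ∪
        ⋃ q : Fin 3 × Bool, ((⋃ p ∈ nearSet α β q, twoStep α p) ∪
          ⋃ p ∈ farOrb α β x q, twoStep α p)).Finite := by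
      refine (finite_deltaLe R).union (Set.finite_iUnion fun q => ?_)
      exact ((nearSet_finite q).biUnion fun p _ => twoStep_finite p).union
        ((farOrb_finite hx q).biUnion fun p _ => twoStep_finite p)
    refine hbig.subset ?_
    rintro y ⟨horb, p, hpU, hy⟩
    have hyTS : y ∈ twoStep α p := by
      rcases hy with ⟨i, rfl⟩ | ⟨i, j, rfl⟩
      · exact Or.inl (Or.inr ⟨i, rfl⟩)
      · exact Or.inr ⟨(i, j), rfl⟩
    obtain ⟨hVp, hTp, σ, -, h1, h2⟩ := hpU
    have hNp : NiceBig α p := niceBig_of_not_inT hVp hTp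
    have hσ : σ 1 ≠ σ 2 := fun h => absurd (σ.injective h) (by decide)
    rcases core_indexed hVp hNp (σ 1) (σ 2) hσ h1 h2 with hbd | ⟨b, ε, -, hε, hL⟩
    · left
      have hd0 := delta_nonneg p
      have hCK1 : (1:ℤ) ≤ bigK α β := by linarith
      have hs1 : ∀ i, delta (vAct α i p) ≤ (bigC α β + bigK α β)^2 := fun i =>
        le_trans (delta_vAct_bound i p) (sq_add_mono hd0 (by linarith) hbd)
      rcases hy with ⟨i, rfl⟩ | ⟨i, j, rfl⟩
      · show delta _ ≤ R
        rw [hR]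
        exact le_trans (hs1 i) (le_sq_add (by positivity) hCK1)
      · show delta _ ≤ R
        rw [hR]
        exact le_trans (delta_vAct_bound j _)
          (sq_add_mono (delta_nonneg _) (by linarith) (hs1 i))
    · obtain ⟨s, rfl⟩ := exists_epsOf hε
      right
      rcases le_total (|p (b+1)|) (2 * bigC α β) with hnear | hfar
      · exact Set.mem_iUnion.mpr ⟨(b, s), Set.mem_union_left _
          (Set.mem_biUnion (show p ∈ nearSet α β (b,s) from ⟨hL, hnear⟩) hyTS)⟩
      · refine Set.mem_iUnion.mpr ⟨(b, s), Set.mem_union_right _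
          (Set.mem_biUnion (show p ∈ farOrb α β x (b,s) from ⟨hL, hfar, ?_⟩) hyTS)⟩
        exact gammaRel_trans horb (gammaRel_symm (gammaRel_of_twoStep hyTS))
  refine ⟨main, main.subset ?_⟩
  rintro y ⟨⟨L, -, hfold⟩, hU⟩
  exact ⟨⟨L, hfold⟩, hU⟩
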